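/- arXiv:0903.3805 — 4 statements merged into one kernel-verified Lean document; each statement's English description precedes it below -/
import Mathlib

section
/- The reproducing kernel admits the bordered-determinant representation: for every n ≥ 0, k_n(x,y) = −(1/Δ_n) · det of the (n+2)×(n+2) matrix whose (0,0) entry is 0, whose first row (after the corner) is (1, conj(w_1(y)), …, conj(w_n(y))), whose first column (after the corner) is (1, w_1(x), …, w_n(x))ᵀ, and whose remaining (n+1)×(n+1) block is Π_n = (α_{jk})_{0≤j,k≤n}. -/
/-!
Write `p_k = ∑ᵢ C_{ki} w_i` with a coefficient matrix `C`. Orthonormality of the `p_k` says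
`C Π_n Cᴴ = 1`, so `Π_n⁻¹ = Cᴴ C` and `k_n(x,y) = w(y)ᴴ Π_n⁻¹ w(x)`. Expanding the bordered
determinant along the invertible block `Π_n` (Schur complement) gives `-Δ_n · w(y)ᴴ Π_n⁻¹ w(x)`.
-/

open MeasureTheory Matrix ComplexConjugate

theorem Matrix.det_bordered {R : Type*} [CommRing R] {m : ℕ} (d : R) (b c : Fin m → R)
    (A : Matrix (Fin m) (Fin m) R) (hA : IsUnit A.det) :
    (of fun i j : Fin (m + 1) =>
      Fin.cases (Fin.cases d b j) (fun i' => Fin.cases (c i') (A i') j) i).det =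
      A.det * (d - b ⬝ᵥ (A⁻¹ *ᵥ c)) := by
  let _ := A.invertibleOfIsUnitDet hA
  have hblocks : (of fun i j : Fin (m + 1) =>
      Fin.cases (Fin.cases d b j) (fun i' => Fin.cases (c i') (A i') j) i) =
      (fromBlocks A (replicateCol PUnit c) (replicateRow PUnit b) (of fun _ _ => d)).submatrix
        ((finSuccEquiv m).trans (Equiv.optionEquivSumPUnit.{0} _))
        ((finSuccEquiv m).trans (Equiv.optionEquivSumPUnit.{0} _)) := by
    ext i j
    induction i using Fin.cases <;> induction j using Fin.cases <;>
      simp [Equiv.optionEquivSumPUnit]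
  rw [hblocks, det_submatrix_equiv_self, det_fromBlocks₁₁, det_unique (n := PUnit),
    invOf_eq_nonsing_inv, Matrix.mul_assoc, ← replicateCol_mulVec]
  rfl

theorem Matrix.mul_conjTranspose_mul_eq_one {ι R : Type*} [Fintype ι] [DecidableEq ι]
    [CommRing R] [StarRing R] {C G : Matrix ι ι R} (h : C * G * Cᴴ = 1) : G * (Cᴴ * C) = 1 := by
  rw [← Matrix.mul_assoc]
  exact mul_eq_one_comm.mp (by rwa [← Matrix.mul_assoc])

theorem Matrix.mulVec_dotProduct_star_mulVec {ι κ R : Type*} [Fintype ι] [Fintype κ]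
    [CommSemiring R] [StarRing R] (C : Matrix κ ι R) (u v : ι → R) :
    (C *ᵥ u) ⬝ᵥ star (C *ᵥ v) = star v ⬝ᵥ (Cᴴ * C) *ᵥ u := by
  rw [← mulVec_mulVec, dotProduct_mulVec, ← star_mulVec, dotProduct_comm]

theorem exists_fin_sum_mul_eq_of_le {R : Type*} [Semiring R] {m N : ℕ} (hmN : m ≤ N)
    (c : Fin m → R) : ∃ c' : Fin N → R, ∀ f : ℕ → R, ∑ i, c i * f i = ∑ i, c' i * f i := by
  obtain ⟨k, rfl⟩ := Nat.exists_eq_add_of_le hmN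
  refine ⟨Fin.append c 0, fun f => ?_⟩
  simp [Fin.sum_univ_add]

section Gram

variable {α ι : Type*} [MeasurableSpace α] {μ : Measure α} [Fintype ι] {v : α → ι → ℂ}
  {G : Matrix ι ι ℂ}

theorem MeasureTheory.integral_dotProduct_mul_conj_dotProduct
    (hv : ∀ i, MemLp (fun x => v x i) 2 μ)
    (hG : ∀ i j, G i j = ∫ x, v x i * conj (v x j) ∂μ) (a b : ι → ℂ) :
    ∫ x, (a ⬝ᵥ v x) * conj (b ⬝ᵥ v x) ∂μ = a ⬝ᵥ (G *ᵥ star b) := by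
  have hint (i j : ι) : Integrable (fun x => a i * conj (b j) * (v x i * conj (v x j))) μ :=
    ((hv i).integrable_mul (hv j).star).const_mul _
  have hexpand (x : α) : (a ⬝ᵥ v x) * conj (b ⬝ᵥ v x) =
      ∑ i, ∑ j, a i * conj (b j) * (v x i * conj (v x j)) := by
    simp only [dotProduct, map_sum, map_mul, Finset.sum_mul_sum]
    exact Finset.sum_congr rfl fun i _ => Finset.sum_congr rfl fun j _ => by ring
  simp_rw [hexpand]
  rw [integral_finsetSum _ fun i _ => integrable_finsetSum _ fun j _ => hint i j]
  simp_rw [integral_finsetSum _ fun j _ => hint _ j, integral_const_mul, ← hG]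
  simp only [dotProduct, mulVec, Finset.mul_sum, Pi.star_apply]
  exact Finset.sum_congr rfl fun i _ => Finset.sum_congr rfl fun j _ => by
    rw [← starRingEnd_apply]; ring

theorem Matrix.mul_mul_conjTranspose_eq_one_of_orthonormal {κ : Type*} [DecidableEq κ]
    (hv : ∀ i, MemLp (fun x => v x i) 2 μ)
    (hG : ∀ i j, G i j = ∫ x, v x i * conj (v x j) ∂μ) {C : Matrix κ ι ℂ}
    (horth : ∀ j k, ∫ x, (C j ⬝ᵥ v x) * conj (C k ⬝ᵥ v x) ∂μ = if j = k then 1 else 0) :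
    C * G * Cᴴ = 1 := by
  ext j k
  rw [one_apply, ← horth, integral_dotProduct_mul_conj_dotProduct hv hG, Matrix.mul_assoc]
  rfl

end Gram

theorem kernel_bordered_determinant_general
    (μ : Measure ℝ)
    (w : ℕ → ℝ → ℂ) (hw : ∀ k, MemLp (w k) 2 μ)
    (α : ℕ → ℕ → ℂ)
    (hα : ∀ j k, α j k = ∫ x, w j x * (starRingEnd ℂ) (w k x) ∂μ)
    (n : ℕ) (G : Matrix (Fin (n + 1)) (Fin (n + 1)) ℂ)
    (hG : ∀ i j : Fin (n + 1), G i j = α i j)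
    (p : ℕ → ℝ → ℂ)
    (horth : ∀ j k : ℕ, ∫ x, p j x * (starRingEnd ℂ) (p k x) ∂μ = if j = k then 1 else 0)
    (hpspan : ∀ m : ℕ, m ≤ n → ∃ c : Fin (m + 1) → ℂ, ∀ x, p m x = ∑ i, c i * w i x) :
    ∀ x y : ℝ,
      ∑ k : Fin (n + 1), p k x * (starRingEnd ℂ) (p k y) =
        -(Matrix.det (Matrix.of fun i j : Fin (n + 2) =>
            Fin.cases
              (Fin.cases (0 : ℂ) (fun j' : Fin (n + 1) => (starRingEnd ℂ) (w j' y)) j)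
              (fun i' : Fin (n + 1) =>
                Fin.cases (w i' x) (fun j' : Fin (n + 1) => α i' j') j)
              i)) / G.det := by
  set v : ℝ → Fin (n + 1) → ℂ := fun t i => w i t
  have hrow (k : Fin (n + 1)) : ∃ c : Fin (n + 1) → ℂ, ∀ t, p k t = c ⬝ᵥ v t := by
    obtain ⟨c, hc⟩ := hpspan k k.is_le
    obtain ⟨c', hc'⟩ := exists_fin_sum_mul_eq_of_le (Nat.succ_le_succ k.is_le) c
    exact ⟨c', fun t => (hc t).trans (hc' fun i => w i t)⟩
  obtain ⟨C, hC⟩ : ∃ C : Matrix (Fin (n + 1)) (Fin (n + 1)) ℂ,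
      ∀ (k : Fin (n + 1)) t, p k t = C k ⬝ᵥ v t := Classical.skolem.mp hrow
  have hGC : G * (Cᴴ * C) = 1 := mul_conjTranspose_mul_eq_one <|
    mul_mul_conjTranspose_eq_one_of_orthonormal (v := v) (fun i => hw i)
      (fun i j => (hG i j).trans (hα i j))
      fun j k => by simpa only [hC, Fin.val_inj] using horth j k
  have hGunit : IsUnit G.det := isUnit_det_of_right_inverse hGC
  intro x y
  simp only [← hG]
  rw [det_bordered _ _ _ _ hGunit, zero_sub, mul_neg, neg_neg,
    mul_div_cancel_left₀ _ hGunit.ne_zero, inv_eq_right_inv hGC]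
  calc ∑ k : Fin (n + 1), p k x * conj (p k y) = (C *ᵥ v x) ⬝ᵥ star (C *ᵥ v y) := by
        simp only [hC]; rfl
    _ = _ := mulVec_dotProduct_star_mulVec C (v x) (v y)

/-- Corollary 1.3: the reproducing kernel admits the bordered-determinant
representation `k_n(x,y) = -(1/Δ_n) · det M(x,y)`, where `M(x,y)` is the `(n+2) × (n+2)`
matrix with `(0,0)` entry `0`, first row `(0, conj(w_0(y)) = 1, conj(w_1(y)), …, conj(w_n(y)))`,
first column `(0, w_0(x) = 1, w_1(x), …, w_n(x))ᵀ`, and remaining block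
`Π_n = (α_{jk})_{0≤j,k≤n}`, `Δ_n = det Π_n`. -/
theorem kernel_bordered_determinant
    (μ : Measure ℝ) [IsProbabilityMeasure μ]
    (hsupp : ∀ s : Set ℝ, s.Finite → μ sᶜ ≠ 0)
    (w : ℕ → ℝ → ℂ) (hw : ∀ k, MemLp (w k) 2 μ)
    (hw0 : w 0 = fun _ => 1)
    (hli : LinearIndependent ℂ fun k => (hw k).toLp (w k))
    (α : ℕ → ℕ → ℂ)
    (hα : ∀ j k, α j k = ∫ x, w j x * (starRingEnd ℂ) (w k x) ∂μ)
    (n : ℕ) (G : Matrix (Fin (n + 1)) (Fin (n + 1)) ℂ)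
    (hG : ∀ i j : Fin (n + 1), G i j = α i j)
    (p : ℕ → ℝ → ℂ)
    (horth : ∀ j k : ℕ, ∫ x, p j x * (starRingEnd ℂ) (p k x) ∂μ = if j = k then 1 else 0)
    (hpspan : ∀ m : ℕ, m ≤ n → ∃ c : Fin (m + 1) → ℂ, ∀ x, p m x = ∑ i, c i * w i x) :
    ∀ x y : ℝ,
      ∑ k : Fin (n + 1), p k x * (starRingEnd ℂ) (p k y) =
        -(Matrix.det (Matrix.of fun i j : Fin (n + 2) =>
            Fin.cases
              (Fin.cases (0 : ℂ) (fun j' : Fin (n + 1) => (starRingEnd ℂ) (w j' y)) j)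
              (fun i' : Fin (n + 1) =>
                Fin.cases (w i' x) (fun j' : Fin (n + 1) => α i' j') j)
              i)) / G.det :=
  kernel_bordered_determinant_general μ w hw α hα n G hG p horth hpspan
end

section
/- Let (β_{jk})_{0≤j,k≤n} = Π_n^{-1} be the inverse Gram matrix, and suppose {u_k}_{k≥0} and {v_k}_{k≥0} are two families of linear functionals on the linear span of {w_n}_{n≥0} (respectively of {conj(w_n)}_{n≥0}) satisfying u_j(w_k) = δ_{jk} and v_j(conj(w_k)) = δ_{jk} for all j,k. Then β_{jk} = Σ_{m=0}^{n} u_k(p_m) · v_j(conj(p_m)) for all 0 ≤ j,k ≤ n, where p_m are the orthonormal functions associated with {w_n}. -/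
/-!
Write `p_m = ∑ᵢ C_{mi} w_i` with a (lower triangular) coefficient matrix `C`. Orthonormality of
the `p_m` says `C Π_n Cᴴ = 1`, hence `Π_n⁻¹ = Cᴴ C`. Biorthogonality reads off the coefficients:
`u_k(p_m) = C_{mk}` and `v_j(conj p_m) = conj C_{mj}`, so
`β_{jk} = ∑_m conj C_{mj} C_{mk} = ∑_m u_k(p_m) v_j(conj p_m)`.
-/

open MeasureTheory ComplexConjugate
open scoped Matrix

namespace Matrix

theorem inv_eq_mul_of_mul_mul_eq_one {ι R : Type*} [Fintype ι] [DecidableEq ι] [CommRing R]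
    {A B C : Matrix ι ι R} (h : A * B * C = 1) : B⁻¹ = C * A := by
  rw [Matrix.mul_assoc, mul_eq_one_comm] at h
  exact inv_eq_right_inv (by rwa [← Matrix.mul_assoc])

end Matrix

theorem LinearMap.apply_sum_smul_of_biorthogonal {R M ι : Type*} [Semiring R]
    [AddCommMonoid M] [Module R M] [Fintype ι] [DecidableEq ι] {u : ι → M →ₗ[R] R} {w : ι → M}
    (h : ∀ j k, u j (w k) = if j = k then 1 else 0) (c : ι → R) (k : ι) :
    u k (∑ i, c i • w i) = c k := by
  simp [h]

theorem exists_sum_smul_eq_of_le {R M : Type*} [Semiring R] [AddCommMonoid M] [Module R M]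
    {w : ℕ → M} {m n : ℕ} (hmn : m ≤ n) (c : Fin m → R) :
    ∃ d : Fin n → R, ∑ i, d i • w i = ∑ i, c i • w i := by
  refine (Submodule.mem_span_range_iff_exists_fun R).mp <|
    Submodule.span_mono ?_ <| (Submodule.mem_span_range_iff_exists_fun R).mpr ⟨c, rfl⟩
  exact Set.range_comp_subset_range (Fin.castLE hmn) fun i : Fin n => w i

theorem exists_matrix_eq_sum_smul_of_le {X R : Type*} [Semiring R] {w p : ℕ → X → R}
    {n : ℕ} (h : ∀ m ≤ n, ∃ c : Fin (m + 1) → R, ∀ x, p m x = ∑ i, c i * w i x) :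
    ∃ C : Matrix (Fin (n + 1)) (Fin (n + 1)) R, ∀ m : Fin (n + 1), p m = ∑ i, C m i • w i := by
  have hrow : ∀ m : Fin (n + 1), ∃ d : Fin (n + 1) → R, p m = ∑ i, d i • w i := fun m => by
    obtain ⟨c, hc⟩ := h m (Nat.lt_succ_iff.mp m.isLt)
    obtain ⟨d, hd⟩ := exists_sum_smul_eq_of_le (w := w) m.isLt c
    exact ⟨d, (funext fun x => by simp [hc, Finset.sum_apply]).trans hd.symm⟩
  exact Classical.skolem.mp hrow

/-- Conjugate-linear in the second slot, as in the paper; for the `L²` inner product this is the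
transpose of Mathlib's `Matrix.gram`. -/
noncomputable def integralGram {X ι : Type*} [MeasurableSpace X] (μ : Measure X) (f : ι → X → ℂ) :
    Matrix ι ι ℂ :=
  Matrix.of fun j k => ∫ x, f j x * conj (f k x) ∂μ

theorem integralGram_sum_smul {X ι κ : Type*} [MeasurableSpace X] {μ : Measure X} [Fintype ι]
    {f : ι → X → ℂ} (hf : ∀ i, MemLp (f i) 2 μ) (C : Matrix κ ι ℂ) :
    integralGram μ (fun m => ∑ i, C m i • f i) = C * integralGram μ f * Cᴴ := by
  have hint : ∀ i k, Integrable (fun x => f i x * conj (f k x)) μ := fun i k =>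
    (hf i).integrable_mul (hf k).star
  ext a b
  have hexpand : ∀ x, (∑ i, C a i • f i) x * conj ((∑ k, C b k • f k) x) =
      ∑ i, ∑ k, C a i * conj (C b k) * (f i x * conj (f k x)) := fun x => by
    simp only [Finset.sum_apply, Pi.smul_apply, smul_eq_mul, map_sum, map_mul, Finset.sum_mul_sum]
    exact Finset.sum_congr rfl fun i _ => Finset.sum_congr rfl fun k _ => by ring
  simp only [integralGram, Matrix.of_apply, hexpand, Matrix.mul_apply, Matrix.conjTranspose_apply,
    RCLike.star_def]
  rw [integral_finsetSum _ fun i _ => integrable_finsetSum _ fun k _ => (hint i k).const_mul _]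
  simp only [integral_finsetSum _ fun k _ => (hint _ k).const_mul _, integral_const_mul,
    Finset.sum_mul]
  rw [Finset.sum_comm]
  exact Finset.sum_congr rfl fun i _ => Finset.sum_congr rfl fun k _ => by ring

theorem inverse_gram_entries_via_functionals_general
    (μ : Measure ℝ)
    (w : ℕ → ℝ → ℂ) (hw : ∀ k, MemLp (w k) 2 μ)
    (α : ℕ → ℕ → ℂ)
    (hα : ∀ j k, α j k = ∫ x, w j x * (starRingEnd ℂ) (w k x) ∂μ)
    (n : ℕ) (G : Matrix (Fin (n + 1)) (Fin (n + 1)) ℂ)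
    (hG : ∀ i j : Fin (n + 1), G i j = α i j)
    (p : ℕ → ℝ → ℂ)
    (horth : ∀ j k : ℕ, ∫ x, p j x * (starRingEnd ℂ) (p k x) ∂μ = if j = k then 1 else 0)
    (hpspan : ∀ m : ℕ, m ≤ n → ∃ c : Fin (m + 1) → ℂ, ∀ x, p m x = ∑ i, c i * w i x)
    (u v : ℕ → (ℝ → ℂ) →ₗ[ℂ] ℂ)
    (hu : ∀ j k : ℕ, u j (w k) = if j = k then 1 else 0)
    (hv : ∀ j k : ℕ, v j (fun x => (starRingEnd ℂ) (w k x)) = if j = k then 1 else 0) :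
    ∀ j k : Fin (n + 1),
      G⁻¹ j k = ∑ m : Fin (n + 1),
        u k (p m) * v j (fun y => (starRingEnd ℂ) (p m y)) := by
  obtain ⟨C, hC⟩ := exists_matrix_eq_sum_smul_of_le hpspan
  have hGw : G = integralGram μ fun i : Fin (n + 1) => w i := by
    ext i j
    simp [integralGram, hG, hα]
  have hGp : integralGram μ (fun m : Fin (n + 1) => p m) = 1 := by
    ext a b
    simp [integralGram, horth, Fin.val_inj, Matrix.one_apply]
  have hCGC : C * G * Cᴴ = 1 := by
    rw [hGw, ← integralGram_sum_smul fun i : Fin (n + 1) => hw i, ← funext hC, hGp]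
  have hu_coeff : ∀ m k : Fin (n + 1), u k (p m) = C m k := fun m k => by
    rw [hC]
    exact LinearMap.apply_sum_smul_of_biorthogonal (u := fun j : Fin (n + 1) => u j)
      (w := fun k => w k) (fun j k => by simp [hu, Fin.val_inj]) _ k
  have hv_coeff : ∀ m j : Fin (n + 1), v j (fun y => (starRingEnd ℂ) (p m y)) = star (C m j) :=
    fun m j => by
    change v j (star (p m)) = _
    rw [hC, star_sum]
    simp only [star_smul]
    exact LinearMap.apply_sum_smul_of_biorthogonal (u := fun j : Fin (n + 1) => v j)
      (w := fun k => star (w k)) (fun j k => (hv j k).trans (by simp [Fin.val_inj])) _ j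
  intro j k
  rw [Matrix.inv_eq_mul_of_mul_mul_eq_one hCGC, Matrix.mul_apply]
  simp [hu_coeff, hv_coeff, mul_comm]

/-- Corollary 1.4: Let `(β_{jk}) = Π_n⁻¹` be the inverse Gram matrix of
`w_0, …, w_n`, and let `{u_k}` and `{v_k}` be linear functionals with `u_j(w_k) = δ_{jk}`
and `v_j(conj(w_k)) = δ_{jk}` for all `j, k`.  Then
`β_{jk} = ∑_{m=0}^n u_k(p_m) · v_j(conj(p_m))` for all `0 ≤ j,k ≤ n`, where `p_m` are the
orthonormal functions associated with `{w_n}` (each `p_m` lying in the span of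
`w_0, …, w_m`). -/
theorem inverse_gram_entries_via_functionals
    (μ : Measure ℝ) [IsProbabilityMeasure μ]
    (hsupp : ∀ s : Set ℝ, s.Finite → μ sᶜ ≠ 0)
    (w : ℕ → ℝ → ℂ) (hw : ∀ k, MemLp (w k) 2 μ)
    (hw0 : w 0 = fun _ => 1)
    (hli : LinearIndependent ℂ fun k => (hw k).toLp (w k))
    (α : ℕ → ℕ → ℂ)
    (hα : ∀ j k, α j k = ∫ x, w j x * (starRingEnd ℂ) (w k x) ∂μ)
    (n : ℕ) (G : Matrix (Fin (n + 1)) (Fin (n + 1)) ℂ)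
    (hG : ∀ i j : Fin (n + 1), G i j = α i j)
    (p : ℕ → ℝ → ℂ)
    (horth : ∀ j k : ℕ, ∫ x, p j x * (starRingEnd ℂ) (p k x) ∂μ = if j = k then 1 else 0)
    (hpspan : ∀ m : ℕ, m ≤ n → ∃ c : Fin (m + 1) → ℂ, ∀ x, p m x = ∑ i, c i * w i x)
    (u v : ℕ → (ℝ → ℂ) →ₗ[ℂ] ℂ)
    (hu : ∀ j k : ℕ, u j (w k) = if j = k then 1 else 0)
    (hv : ∀ j k : ℕ, v j (fun x => (starRingEnd ℂ) (w k x)) = if j = k then 1 else 0) :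
    ∀ j k : Fin (n + 1),
      G⁻¹ j k = ∑ m : Fin (n + 1),
        u k (p m) * v j (fun y => (starRingEnd ℂ) (p m y)) :=
  inverse_gram_entries_via_functionals_general μ w hw α hα n G hG p horth hpspan u v hu hv
end

section
/- For every n ≥ 0, the (n+1)×(n+1) real matrix with (i,j) entry ((1+(−1)^{i+j})/(2√π)) · Γ((i+j+1)/2), for 0 ≤ i,j ≤ n, has determinant equal to 2^{−n(n+1)/2} · ∏_{k=0}^{n} k!. -/
/-!
The entries are the moments `μ_m = L (X ^ m)` of the functional `L p = π^{-1/2} ∫ p(x) e^{-x²} dx`.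
Since `μ_{m+2} = (m + 1) / 2 · μ_m`, the functional satisfies `L (X p) = ½ L p'` (Gaussian
integration by parts). For the monic Hermite polynomials `P_{k+1} = X P_k - ½ P_k'` this gives
`L (P_k q) = 2^{-k} L (q^{(k)})`, so the Gram matrix `(L (P_i P_j))` is upper triangular with
diagonal `2^{-i} i!`. It equals `C H Cᵀ` for the Hankel matrix `H = (μ_{i+j})` and the unitriangular
coefficient matrix `C` of the `P_i`, hence `det H = ∏ 2^{-i} i!`.
-/

open Polynomial Finset Matrix
open scoped Nat

namespace Polynomial

section Semiring

variable {R : Type*} [Semiring R]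

theorem iterate_derivative_of_natDegree_le {p : R[X]} {n : ℕ} (hp : p.natDegree ≤ n) :
    derivative^[n] p = C (n ! * p.coeff n) := by
  rw [eq_C_of_natDegree_le_zero ((natDegree_iterate_derivative p n).trans (by omega)),
    coeff_iterate_derivative, zero_add, Nat.descFactorial_self, nsmul_eq_mul]

theorem sum_fin_C_mul_X_pow {p : R[X]} {n : ℕ} (hp : p.natDegree ≤ n) :
    ∑ k : Fin (n + 1), C (p.coeff k) * X ^ (k : ℕ) = p := by
  rw [Fin.sum_univ_eq_sum_range (fun k => C (p.coeff k) * X ^ k),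
    ← as_sum_range_C_mul_X_pow' p (Nat.lt_succ_of_le hp)]

end Semiring

section ScaledHermite

variable {R : Type*} [CommRing R] (c : R)

/-- For `c = 1` these are the probabilists' Hermite polynomials (`Polynomial.hermite` mapped
to `R`), for `c = 1 / 2` the monic physicists' ones. -/
noncomputable def scaledHermite : ℕ → R[X]
  | 0 => 1
  | n + 1 => X * scaledHermite n - C c * derivative (scaledHermite n)

@[simp] theorem scaledHermite_zero : scaledHermite c 0 = 1 := rfl

theorem scaledHermite_succ (n : ℕ) :
    scaledHermite c (n + 1) = X * scaledHermite c n - C c * derivative (scaledHermite c n) := rfl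

theorem natDegree_scaledHermite_le (n : ℕ) : (scaledHermite c n).natDegree ≤ n := by
  induction n with
  | zero => simp
  | succ n ih =>
    rw [scaledHermite_succ]
    refine (natDegree_sub_le _ _).trans (max_le ?_ ?_)
    · exact natDegree_mul_le.trans (by linarith [natDegree_X_le (R := R)])
    · exact (natDegree_C_mul_le _ _).trans <| (natDegree_derivative_le _).trans (by omega)

theorem coeff_scaledHermite_of_lt {n k : ℕ} (h : n < k) : (scaledHermite c n).coeff k = 0 :=
  coeff_eq_zero_of_natDegree_lt ((natDegree_scaledHermite_le c n).trans_lt h)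

theorem coeff_scaledHermite_self (n : ℕ) : (scaledHermite c n).coeff n = 1 := by
  induction n with
  | zero => simp
  | succ n ih =>
    rw [scaledHermite_succ, coeff_sub, coeff_X_mul, ih, coeff_C_mul, coeff_derivative,
      coeff_scaledHermite_of_lt c (by omega : n < n + 1 + 1)]
    ring

variable {c} {L : R[X] →ₗ[R] R} (hL : ∀ p, L (X * p) = c * L (derivative p))
include hL

theorem map_scaledHermite_mul (n : ℕ) (q : R[X]) :
    L (scaledHermite c n * q) = c ^ n * L (derivative^[n] q) := by
  induction n generalizing q with
  | zero => simp
  | succ n ih =>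
    have hX : L (X * scaledHermite c n * q) =
        c * (L (derivative (scaledHermite c n) * q) + L (scaledHermite c n * derivative q)) := by
      rw [mul_assoc, hL, derivative_mul, map_add]
    rw [scaledHermite_succ, sub_mul, map_sub, hX, mul_assoc, ← smul_eq_C_mul, map_smul,
      smul_eq_mul, ih, Function.iterate_succ_apply]
    ring

theorem map_scaledHermite_mul_of_natDegree_lt {n : ℕ} {q : R[X]} (hq : q.natDegree < n) :
    L (scaledHermite c n * q) = 0 := by
  rw [map_scaledHermite_mul hL, iterate_derivative_eq_zero hq, map_zero, mul_zero]

theorem map_scaledHermite_mul_self (n : ℕ) :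
    L (scaledHermite c n * scaledHermite c n) = c ^ n * n ! * L 1 := by
  rw [map_scaledHermite_mul hL, iterate_derivative_of_natDegree_le (natDegree_scaledHermite_le c n),
    coeff_scaledHermite_self, mul_one, ← mul_one (C _), ← smul_eq_C_mul, map_smul, smul_eq_mul,
    mul_assoc]

end ScaledHermite

section MomentFunctional

variable {R : Type*} [CommSemiring R]

noncomputable def momentFunctional (μ : ℕ → R) : R[X] →ₗ[R] R :=
  lsum fun m => μ m • LinearMap.id

theorem momentFunctional_monomial (μ : ℕ → R) (m : ℕ) (a : R) :
    momentFunctional μ (monomial m a) = μ m * a := by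
  simp [momentFunctional, sum_monomial_index]

theorem momentFunctional_X_pow (μ : ℕ → R) (m : ℕ) : momentFunctional μ (X ^ m) = μ m := by
  rw [← monomial_one_right_eq_X_pow, momentFunctional_monomial, mul_one]

theorem momentFunctional_X_mul {c : R} {μ : ℕ → R} (h₁ : μ 1 = 0)
    (h₂ : ∀ m, μ (m + 2) = c * (m + 1) * μ m) (p : R[X]) :
    momentFunctional μ (X * p) = c * momentFunctional μ (derivative p) := by
  induction p using Polynomial.induction_on' with
  | add p q hp hq => rw [mul_add, map_add, hp, hq, derivative_add, map_add, mul_add]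
  | monomial m a =>
    rw [X_mul_monomial, derivative_monomial, momentFunctional_monomial, momentFunctional_monomial]
    cases m with
    | zero => simp [h₁]
    | succ m => rw [h₂]; push_cast; ring

end MomentFunctional

end Polynomial

namespace Matrix

section CommSemiring

variable {R ι : Type*} [CommSemiring R]

noncomputable def hankel (L : R[X] →ₗ[R] R) (n : ℕ) : Matrix (Fin (n + 1)) (Fin (n + 1)) R :=
  of fun k l => L (X ^ (k + l : ℕ))

def polyCoeff (p : ι → R[X]) (n : ℕ) : Matrix ι (Fin (n + 1)) R :=
  of fun i k => (p i).coeff k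

theorem polyCoeff_mul_hankel_mul_transpose_apply (L : R[X] →ₗ[R] R) {p : ι → R[X]} {n : ℕ}
    (hp : ∀ i, (p i).natDegree ≤ n) (i j : ι) :
    (polyCoeff p n * hankel L n * (polyCoeff p n)ᵀ) i j = L (p i * p j) := by
  conv_rhs => rw [← sum_fin_C_mul_X_pow (hp i), ← sum_fin_C_mul_X_pow (hp j)]
  simp only [mul_apply, polyCoeff, hankel, of_apply, transpose_apply, sum_mul, mul_sum, map_sum]
  refine sum_congr rfl fun k _ => sum_congr rfl fun l _ => ?_
  rw [mul_mul_mul_comm, ← C_mul, ← smul_eq_C_mul, map_smul, smul_eq_mul, pow_add]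
  ring

end CommSemiring

theorem det_hankel_eq_prod_factorial {R : Type*} [CommRing R] {c : R} {L : R[X] →ₗ[R] R}
    (hL : ∀ p, L (X * p) = c * L (derivative p)) (n : ℕ) :
    (hankel L n).det = ∏ i ∈ range (n + 1), c ^ i * i ! * L 1 := by
  set P := polyCoeff (fun i : Fin (n + 1) => scaledHermite c i) n
  have hdeg (i : Fin (n + 1)) : (scaledHermite c i).natDegree ≤ n :=
    (natDegree_scaledHermite_le c i).trans (Nat.lt_succ_iff.mp i.isLt)
  have hP : P.det = 1 := by
    rw [det_of_isLowerTriangular P fun i j hij => coeff_scaledHermite_of_lt c hij]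
    exact prod_eq_one fun i _ => coeff_scaledHermite_self c i
  have hgram : (P * hankel L n * Pᵀ).IsUpperTriangular := fun i j hji => by
    rw [polyCoeff_mul_hankel_mul_transpose_apply L hdeg]
    exact map_scaledHermite_mul_of_natDegree_lt hL ((natDegree_scaledHermite_le c j).trans_lt hji)
  calc (hankel L n).det = (P * hankel L n * Pᵀ).det := by
        rw [det_mul, det_mul, det_transpose, hP, one_mul, mul_one]
    _ = ∏ i : Fin (n + 1), (P * hankel L n * Pᵀ) i i := det_of_isUpperTriangular hgram
    _ = ∏ i ∈ range (n + 1), c ^ i * i ! * L 1 := by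
        rw [← Fin.prod_univ_eq_prod_range]
        exact prod_congr rfl fun i _ => by
          rw [polyCoeff_mul_hankel_mul_transpose_apply L hdeg, map_scaledHermite_mul_self hL]

end Matrix

/-- `π^{-1/2} ∫ x^m e^{-x²} dx`. -/
noncomputable def hermiteMoment (m : ℕ) : ℝ :=
  (1 + (-1) ^ m) / (2 * √Real.pi) * Real.Gamma ((m + 1) / 2)

theorem hermiteMoment_zero : hermiteMoment 0 = 1 := by
  have : √Real.pi ≠ 0 := by positivity
  rw [hermiteMoment]
  norm_num [Real.Gamma_one_half_eq]
  field_simp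

theorem hermiteMoment_one : hermiteMoment 1 = 0 := by
  simp [hermiteMoment]

theorem hermiteMoment_add_two (m : ℕ) :
    hermiteMoment (m + 2) = 2⁻¹ * (m + 1) * hermiteMoment m := by
  have hGamma : Real.Gamma ((((m + 2 : ℕ) : ℝ) + 1) / 2) =
      (m + 1) / 2 * Real.Gamma ((m + 1) / 2) := by
    rw [← Real.Gamma_add_one (by positivity)]
    congr 1; push_cast; ring
  rw [hermiteMoment, hermiteMoment, hGamma, pow_add, neg_one_sq, mul_one]
  ring

/-- For every `n ≥ 0`, the `(n+1) × (n+1)` real matrix with `(i,j)` entry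
`((1 + (-1)^(i+j)) / (2√π)) * Γ((i+j+1)/2)` has determinant
`2^(-n(n+1)/2) * ∏_{k=0}^n k!`. -/
theorem hermite_moment_matrix_det (n : ℕ) :
    Matrix.det (Matrix.of fun i j : Fin (n + 1) =>
      ((1 + (-1 : ℝ) ^ ((i : ℕ) + (j : ℕ))) / (2 * Real.sqrt Real.pi)) *
        Real.Gamma (((i : ℕ) + (j : ℕ) + 1 : ℝ) / 2)) =
      (2 : ℝ) ^ (-(n * (n + 1) / 2 : ℕ) : ℤ) *
        ∏ k ∈ Finset.range (n + 1), (Nat.factorial k : ℝ) := by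
  have hankel_eq : (Matrix.of fun i j : Fin (n + 1) =>
      ((1 + (-1 : ℝ) ^ ((i : ℕ) + (j : ℕ))) / (2 * Real.sqrt Real.pi)) *
        Real.Gamma (((i : ℕ) + (j : ℕ) + 1 : ℝ) / 2)) =
      hankel (momentFunctional hermiteMoment) n := by
    ext i j
    simp [hankel, momentFunctional_X_pow, hermiteMoment]
  have gauss_sum : ∑ i ∈ range (n + 1), i = n * (n + 1) / 2 := by
    rw [sum_range_id, Nat.add_sub_cancel, mul_comm]
  rw [hankel_eq, det_hankel_eq_prod_factorial
      (momentFunctional_X_mul hermiteMoment_one hermiteMoment_add_two),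
    ← pow_zero X, momentFunctional_X_pow, hermiteMoment_zero]
  simp only [mul_one, prod_mul_distrib, inv_pow, prod_inv_distrib]
  rw [prod_pow_eq_pow_sum, gauss_sum, _root_.zpow_neg, zpow_natCast]
end

section
/- Let α > −1. For every n ≥ 0, the (n+1)×(n+1) matrix with (i,j) entry (α+1)_{i+j}, for 0 ≤ i,j ≤ n, is invertible and its inverse has (i,j) entry β_{ij} = [(−1)^{i+j} / ((α+1)_i · (α+1)_j)] · Σ_{k=max(i,j)}^{n} ((α+1)_k / k!) · C(k,i) · C(k,j), where C(k,i) is the binomial coefficient. -/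
/-!
With `a = α + 1`, Newton's forward-difference expansion of `(a + i)_j` in `i`, together with
`Δᵏ (x)_j = j (j-1) ⋯ (j-k+1) · (x + k)_{j-k}`, gives the factorisation
`(a)_{i+j} = ∑ₖ (a)_i C(i,k) · (k! / (a)_k) · (a)_j C(j,k)`, i.e. `H = P V Pᵀ` with `P` a Pascal
matrix whose rows are scaled by `(a)_i`. Binomial inversion inverts `P`, so `H⁻¹ = P⁻ᵀ V⁻¹ P⁻¹`,
whose entries are the stated ones.
-/

/-- The shifted factorial (Pochhammer symbol) `(x)_m = x (x+1) ⋯ (x+m-1)`. -/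
noncomputable def poch (x : ℝ) (m : ℕ) : ℝ := Polynomial.eval x (ascPochhammer ℝ m)

open Finset Polynomial fwdDiff

lemma poch_add (x : ℝ) (m k : ℕ) : poch x (m + k) = poch x m * poch (x + m) k := by
  simp [poch, ← ascPochhammer_mul, eval_comp]

lemma fwdDiff_poch_succ (m : ℕ) :
    Δ_[1] (fun x => poch x (m + 1)) = fun x => (m + 1 : ℝ) * poch (x + 1) m := by
  ext x
  have hright : poch (x + 1) (m + 1) = poch (x + 1) m * (x + 1 + m) := by
    simp [poch, ascPochhammer_succ_right]
  have hleft : poch x (m + 1) = x * poch (x + 1) m := by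
    simp [poch, ascPochhammer_succ_left, eval_comp]
  rw [fwdDiff, hright, hleft]
  ring

lemma fwdDiff_iter_poch (l k : ℕ) (x : ℝ) :
    Δ_[1] ^[k] (fun y => poch y l) x = l.descFactorial k * poch (x + k) (l - k) := by
  induction k generalizing l x with
  | zero => simp
  | succ k ih =>
    rw [Function.iterate_succ_apply]
    cases l with
    | zero =>
      have hconst : Δ_[1] (fun y => poch y 0) = fun _ => 0 := by simp [poch]
      rw [hconst, Function.iterate_fixed (fwdDiff_const 1 0)]
      simp
    | succ m =>
      have hsmul : (fun x => (m + 1 : ℝ) * poch (x + 1) m) =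
          (m + 1 : ℝ) • fun y => poch (y + 1) m := rfl
      rw [fwdDiff_poch_succ, hsmul, fwdDiff_iter_const_smul, Pi.smul_apply,
        fwdDiff_iter_comp_add _ (fun y => poch y m), ih, Nat.succ_descFactorial_succ,
        Nat.succ_sub_succ, smul_eq_mul, add_assoc, add_comm 1 (k : ℝ)]
      push_cast
      ring

lemma sum_range_choose_mul_of_lt {R : Type*} [Semiring R] (f : ℕ → R) {i N : ℕ}
    (hi : i < N) :
    ∑ k ∈ range N, (i.choose k : R) * f k = ∑ k ∈ range (i + 1), (i.choose k : R) * f k := by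
  refine (sum_subset (range_subset_range.mpr hi) fun k _ hk => ?_).symm
  rw [Nat.choose_eq_zero_of_lt (by simpa using hk), Nat.cast_zero, zero_mul]

lemma choose_mul_poch_mul_poch_add_sub (a : ℝ) (j k : ℕ) :
    (j.choose k : ℝ) * (poch a k * poch (a + k) (j - k)) = j.choose k * poch a j := by
  rcases le_or_gt k j with hkj | hjk
  · rw [← poch_add, Nat.add_sub_cancel' hkj]
  · simp [Nat.choose_eq_zero_of_lt hjk]

lemma poch_add_eq_sum (a : ℝ) (i j : ℕ) :
    poch a (i + j) = ∑ k ∈ range (i + 1),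
      i.choose k * (poch a i * (k.factorial : ℝ) * j.choose k * poch (a + k) (j - k)) := by
  have newton := shift_eq_sum_fwdDiff_iter 1 (fun y => poch y j) i a
  simp only [nsmul_eq_mul, mul_one, fwdDiff_iter_poch,
    Nat.descFactorial_eq_factorial_mul_choose] at newton
  rw [poch_add, newton, mul_sum]
  refine sum_congr rfl fun k _ => ?_
  push_cast
  ring

lemma sum_neg_one_pow_mul_choose_mul_choose (i j : ℕ) :
    ∑ k ∈ range (i + 1), (i.choose k : ℤ) * ((-1) ^ (i + k) * k.choose j) =
      if i = j then 1 else 0 := by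
  rw [← fwdDiff_iter_choose_zero, fwdDiff_iter_eq_sum_shift]
  refine sum_congr rfl fun k hk => ?_
  have hki : k ≤ i := Nat.lt_succ_iff.mp (mem_range.mp hk)
  have hsign : (-1 : ℤ) ^ (i + k) = (-1) ^ (i - k) := by
    rw [show i + k = (i - k) + 2 * k by omega, pow_add, pow_mul, neg_one_sq, one_pow, mul_one]
  rw [hsign, zero_add, smul_eq_mul, smul_eq_mul, mul_one]
  ring

section Matrices

open Matrix

variable (a : ℝ) (N n : ℕ)

noncomputable def pochHankel : Matrix (Fin N) (Fin N) ℝ :=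
  of fun i j => poch a (i + j)

noncomputable def pochHankelInv : Matrix (Fin (n + 1)) (Fin (n + 1)) ℝ :=
  of fun i j => (-1 : ℝ) ^ ((i : ℕ) + (j : ℕ)) / (poch a i * poch a j) *
    ∑ k ∈ Icc (max (i : ℕ) (j : ℕ)) n,
      poch a k / (Nat.factorial k : ℝ) * (k.choose i : ℝ) * (k.choose j : ℝ)

noncomputable def pochPascal : Matrix (Fin N) (Fin N) ℝ :=
  of fun i k => poch a i * (i : ℕ).choose k

noncomputable def pochPascalInv : Matrix (Fin N) (Fin N) ℝ :=
  of fun k i => (-1) ^ ((k : ℕ) + i) * (k : ℕ).choose i / poch a i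

variable {a}

lemma pochHankel_eq_pochPascal_mul (ha : ∀ m, poch a m ≠ 0) :
    pochHankel a N =
      pochPascal a N * diagonal (fun k : Fin N => (k : ℕ).factorial / poch a k) *
        (pochPascal a N)ᵀ := by
  ext i j
  rw [pochHankel, of_apply, poch_add_eq_sum, ← sum_range_choose_mul_of_lt _ i.isLt, mul_apply,
    ← Fin.sum_univ_eq_sum_range]
  refine sum_congr rfl fun k _ => ?_
  rw [mul_diagonal, transpose_apply, pochPascal, of_apply, of_apply, mul_comm (poch a j),
    ← choose_mul_poch_mul_poch_add_sub a j k]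
  field_simp [ha k]

lemma pochPascalInv_mul_pochPascal (ha : ∀ m, poch a m ≠ 0) :
    pochPascalInv a N * pochPascal a N = 1 := by
  ext k j
  have inversion := congrArg (Int.cast : ℤ → ℝ) (sum_neg_one_pow_mul_choose_mul_choose k j)
  push_cast at inversion
  have hterm : ∀ i : Fin N, pochPascalInv a N k i * pochPascal a N i j =
      ((k : ℕ).choose i : ℝ) * ((-1) ^ ((k : ℕ) + i) * (i : ℕ).choose j) := fun i => by
    simp only [pochPascalInv, pochPascal, of_apply]
    field_simp [ha i]
  rw [mul_apply, one_apply, sum_congr rfl fun i _ => hterm i,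
    Fin.sum_univ_eq_sum_range
      (fun i => ((k : ℕ).choose i : ℝ) * ((-1) ^ ((k : ℕ) + i) * i.choose j)),
    sum_range_choose_mul_of_lt _ k.isLt, inversion]
  simp [Fin.val_inj]

lemma pochHankelInv_eq_pochPascalInv_mul :
    pochHankelInv a n = (pochPascalInv a (n + 1))ᵀ *
      diagonal (fun k : Fin (n + 1) => poch a k / (k : ℕ).factorial) *
        pochPascalInv a (n + 1) := by
  ext i j
  have hIcc : ∑ k ∈ Icc (max (i : ℕ) j) n,
        poch a k / (k.factorial : ℝ) * (k.choose i : ℝ) * (k.choose j : ℝ) =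
      ∑ k ∈ range (n + 1),
        poch a k / (k.factorial : ℝ) * (k.choose i : ℝ) * (k.choose j : ℝ) := by
    refine sum_subset (fun k hk => mem_range.mpr (Nat.lt_succ_of_le (mem_Icc.mp hk).2))
      fun k hk hk' => ?_
    have hk : k < max (i : ℕ) j := by
      simp only [mem_Icc, mem_range, not_and_or, not_le] at hk hk'
      omega
    rcases lt_max_iff.mp hk with hki | hkj
    · simp [Nat.choose_eq_zero_of_lt hki]
    · simp [Nat.choose_eq_zero_of_lt hkj]
  rw [pochHankelInv, of_apply, hIcc, mul_apply, ← Fin.sum_univ_eq_sum_range, mul_sum]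
  refine sum_congr rfl fun k _ => ?_
  simp only [mul_diagonal, transpose_apply, pochPascalInv, of_apply]
  have hsign : (-1 : ℝ) ^ ((i : ℕ) + j) = (-1) ^ ((k : ℕ) + i) * (-1) ^ ((k : ℕ) + j) := by
    rw [← pow_add, show (k : ℕ) + i + (k + j) = i + j + 2 * k by ring, pow_add _ (_ + _),
      pow_mul, neg_one_sq, one_pow, mul_one]
  rw [hsign]
  ring

lemma pochHankelInv_mul_pochHankel (ha : ∀ m, poch a m ≠ 0) :
    pochHankelInv a n * pochHankel a (n + 1) = 1 := by
  set P := pochPascal a (n + 1)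
  set Q := pochPascalInv a (n + 1)
  set W := diagonal fun k : Fin (n + 1) => poch a k / (k : ℕ).factorial
  set V := diagonal fun k : Fin (n + 1) => ((k : ℕ).factorial : ℝ) / poch a k
  have hQP : Q * P = 1 := pochPascalInv_mul_pochPascal (n + 1) ha
  have hWV : W * V = 1 := by
    rw [diagonal_mul_diagonal, ← diagonal_one]
    congr 1
    funext k
    field_simp [ha k]
  calc pochHankelInv a n * pochHankel a (n + 1)
      = Qᵀ * W * Q * (P * V * Pᵀ) := by
        rw [pochHankelInv_eq_pochPascalInv_mul, pochHankel_eq_pochPascal_mul _ ha]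
    _ = Qᵀ * (W * (Q * P) * V) * Pᵀ := by simp only [Matrix.mul_assoc]
    _ = (P * Q)ᵀ := by rw [hQP, Matrix.mul_one, hWV, Matrix.mul_one, transpose_mul]
    _ = 1 := by rw [mul_eq_one_comm.mp hQP, transpose_one]

end Matrices

/-- For `α > -1` and every `n ≥ 0`, the `(n+1) × (n+1)` matrix with `(i,j)` entry
`(α+1)_{i+j}` is invertible, with inverse entries
`β_{ij} = ((-1)^(i+j) / ((α+1)_i (α+1)_j)) ∑_{k=max(i,j)}^n ((α+1)_k / k!) C(k,i) C(k,j)`. -/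
theorem laguerre_moment_matrix_inv (α : ℝ) (hα : -1 < α) (n : ℕ) :
    (Matrix.of fun i j : Fin (n + 1) => poch (α + 1) ((i : ℕ) + (j : ℕ))) *
      (Matrix.of fun i j : Fin (n + 1) =>
        (-1 : ℝ) ^ ((i : ℕ) + (j : ℕ)) / (poch (α + 1) i * poch (α + 1) j) *
          ∑ k ∈ Finset.Icc (max (i : ℕ) (j : ℕ)) n,
            poch (α + 1) k / (Nat.factorial k : ℝ) * (k.choose i : ℝ) * (k.choose j : ℝ)) = 1 ∧
    (Matrix.of fun i j : Fin (n + 1) =>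
        (-1 : ℝ) ^ ((i : ℕ) + (j : ℕ)) / (poch (α + 1) i * poch (α + 1) j) *
          ∑ k ∈ Finset.Icc (max (i : ℕ) (j : ℕ)) n,
            poch (α + 1) k / (Nat.factorial k : ℝ) * (k.choose i : ℝ) * (k.choose j : ℝ)) *
      (Matrix.of fun i j : Fin (n + 1) => poch (α + 1) ((i : ℕ) + (j : ℕ))) = 1 := by
  have ha : ∀ m, poch (α + 1) m ≠ 0 := fun m => (ascPochhammer_pos m _ (by linarith)).ne'
  have h := pochHankelInv_mul_pochHankel n ha
  exact ⟨mul_eq_one_comm.mp h, h⟩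
end
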